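/- arXiv:2312.00302 — 3 statements merged into one kernel-verified Lean document; each statement's English description precedes it below -/
import Mathlib

section
/- Let n ≥ 1. In the polynomial ring ℤ[X₀, …, X_{n−1}] (MvPolynomial (Fin n) ℤ), let I be the ideal generated by the polynomials Xᵢ² − (2·Xᵢ + X_{i+1}) for 0 ≤ i ≤ n−2 together with X_{n−1}². Then for every polynomial f ∈ ℤ[X₀, …, X_{n−1}] there exists a multilinear polynomial g (i.e., every monomial in the support of g has every exponent at most 1) such that f − g ∈ I. -/
open MvPolynomial

/-- The generators of the ideal `I`: `Xᵢ² − (2Xᵢ + X_{i+1})` for `i ≤ n-2`, and `X_{n-1}²`. -/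
noncomputable def gens (n : ℕ) : Fin n → MvPolynomial (Fin n) ℤ := fun i =>
  if h : (i : ℕ) + 1 < n then X i ^ 2 - (2 * X i + X ⟨(i : ℕ) + 1, h⟩) else X i ^ 2

/-!
Modulo `I`, the polynomials congruent to a multilinear one form a `ℤ`-submodule containing the
constants, so it suffices that this submodule is stable under multiplication by every `Xⱼ`.
For a multilinear monomial `m = Xⱼ·m'`, the relation `Xⱼ² ≡ 2Xⱼ + X_{j+1}` gives
`Xⱼ·m ≡ 2m + X_{j+1}·m'`, so stability for `j` reduces to stability for `j + 1`: a descending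
induction on `j`, which ends with `X_{n-1}² ∈ I`.
-/

noncomputable def multilinearModGens (n : ℕ) : Submodule ℤ (MvPolynomial (Fin n) ℤ) :=
  restrictDegree (Fin n) ℤ 1 ⊔ (Ideal.span (Set.range (gens n))).restrictScalars ℤ

lemma gens_castSucc (k : ℕ) (i : Fin k) :
    gens (k + 1) i.castSucc = X i.castSucc ^ 2 - (2 * X i.castSucc + X i.succ) := by
  simp [gens, Fin.succ]

lemma gens_last (k : ℕ) : gens (k + 1) (Fin.last k) = X (Fin.last k) ^ 2 := by
  simp [gens]

lemma mul_gens_mem_multilinearModGens {n : ℕ} (p : MvPolynomial (Fin n) ℤ) (i : Fin n) :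
    p * gens n i ∈ multilinearModGens n :=
  Submodule.mem_sup_right (Ideal.mul_mem_left _ p (Ideal.subset_span ⟨i, rfl⟩))

lemma monomial_mem_restrictDegree {σ R : Type*} [CommSemiring R] {d : ℕ} {s : σ →₀ ℕ}
    (hs : ∀ i, s i ≤ d) (r : R) : monomial s r ∈ restrictDegree σ R d := by
  rw [restrictDegree, monomial_mem_restrictSupport]
  exact Or.inl hs

lemma monomial_mul_X_mem_restrictDegree_or {σ R : Type*} [CommSemiring R] {s : σ →₀ ℕ}
    (hs : ∀ i, s i ≤ 1) (j : σ) :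
    monomial s 1 * X j ∈ restrictDegree σ R 1 ∨
      ∃ t : σ →₀ ℕ, (∀ i, t i ≤ 1) ∧ monomial s (1 : R) = monomial t 1 * X j := by
  classical
  rcases Nat.le_one_iff_eq_zero_or_eq_one.mp (hs j) with hj | hj
  · left
    rw [X, monomial_mul, mul_one]
    refine monomial_mem_restrictDegree (fun i => ?_) 1
    rcases eq_or_ne i j with rfl | hij
    · simp [hj]
    · simpa [Finsupp.single_apply, hij.symm] using hs i
  · right
    refine ⟨s.erase j, fun i => ?_, ?_⟩
    · rw [Finsupp.erase_apply]
      split_ifs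
      exacts [zero_le_one, hs i]
    · rw [X, monomial_mul, mul_one, add_comm, ← hj, Finsupp.single_add_erase]

lemma monomial_mul_X_mem_multilinearModGens (k : ℕ) (j : Fin (k + 1)) :
    ∀ s : Fin (k + 1) →₀ ℕ, (∀ i, s i ≤ 1) →
      monomial s 1 * X j ∈ multilinearModGens (k + 1) := by
  induction j using Fin.reverseInduction with
  | last =>
    intro s hs
    rcases monomial_mul_X_mem_restrictDegree_or (R := ℤ) hs (Fin.last k) with h | ⟨t, -, hst⟩
    · exact Submodule.mem_sup_left h
    · rw [hst, mul_assoc, ← pow_two, ← gens_last]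
      exact mul_gens_mem_multilinearModGens _ _
  | cast j ih =>
    intro s hs
    rcases monomial_mul_X_mem_restrictDegree_or (R := ℤ) hs j.castSucc with h | ⟨t, ht, hst⟩
    · exact Submodule.mem_sup_left h
    · have hs' : monomial s 1 ∈ multilinearModGens (k + 1) :=
        Submodule.mem_sup_left (monomial_mem_restrictDegree hs 1)
      have hrel : monomial s 1 * X j.castSucc = monomial t 1 * gens (k + 1) j.castSucc +
          (monomial s 1 + monomial s 1) + monomial t 1 * X j.succ := by
        rw [gens_castSucc, hst]
        ring
      rw [hrel]
      exact add_mem (add_mem (mul_gens_mem_multilinearModGens _ _) (add_mem hs' hs')) (ih t ht)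

lemma multilinearModGens_le_comap_mulRight_X {n : ℕ} (j : Fin n) :
    multilinearModGens n ≤ (multilinearModGens n).comap (LinearMap.mulRight ℤ (X j)) := by
  refine sup_le ?_ fun p hp => Submodule.mem_sup_right (Ideal.mul_mem_right _ _ hp)
  rw [restrictDegree, restrictSupport_eq_span, Submodule.span_le]
  rintro _ ⟨s, hs, rfl⟩
  cases n with
  | zero => exact j.elim0
  | succ k => exact monomial_mul_X_mem_multilinearModGens k j s hs

lemma multilinearModGens_eq_top (n : ℕ) : multilinearModGens n = ⊤ := by
  rw [eq_top_iff]
  rintro p -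
  induction p using MvPolynomial.induction_on with
  | C a => exact Submodule.mem_sup_left (monomial_mem_restrictDegree (by simp) a)
  | add p q hp hq => exact add_mem hp hq
  | mul_X p j hp => exact multilinearModGens_le_comap_mulRight_X j hp

theorem stmt0_general (n : ℕ) (f : MvPolynomial (Fin n) ℤ) :
    ∃ g : MvPolynomial (Fin n) ℤ,
      (∀ m ∈ g.support, ∀ i : Fin n, m i ≤ 1) ∧
      f - g ∈ Ideal.span (Set.range (gens n)) := by
  have hf : f ∈ multilinearModGens n := by
    rw [multilinearModGens_eq_top]
    exact Submodule.mem_top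
  obtain ⟨g, hg, h, hh, rfl⟩ := Submodule.mem_sup.mp hf
  exact ⟨g, (mem_restrictDegree _ g 1).mp hg, by simpa using hh⟩

theorem stmt0 (n : ℕ) (hn : 1 ≤ n) (f : MvPolynomial (Fin n) ℤ) :
    ∃ g : MvPolynomial (Fin n) ℤ,
      (∀ m ∈ g.support, ∀ i : Fin n, m i ≤ 1) ∧
      f - g ∈ Ideal.span (Set.range (gens n)) :=
  stmt0_general n f
end

section
/- Let n ≥ 1. In ℤ[X₀, …, X_{n−1}], let I be the ideal generated by Xᵢ² − (2·Xᵢ + X_{i+1}) for 0 ≤ i ≤ n−2 together with X_{n−1}². If g is a multilinear polynomial (every exponent in every monomial of its support is at most 1) and g ∈ I, then g = 0. Consequently the multilinear representative of any residue class modulo I is unique. -/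
/-!
Substitute `Xᵢ ↦ Fᵢ` in `ℤ[X]`, where `F₀ = X`, `F_{i+1} = Fᵢ² − 2Fᵢ` (`Fᵢ = quadIter ℤ i`).
This kills every generator `Xᵢ² − 2Xᵢ − X_{i+1}` and sends `X_{n−1}²` to `F_{n−1}²`, so the
image of `I` is divisible by `F_{n−1}²`, a monic polynomial of degree `2ⁿ`. Since `Fᵢ` is monic of
degree `2ⁱ`, a squarefree monomial `∏_{i ∈ S} Xᵢ` goes to a monic polynomial of degree
`∑_{i ∈ S} 2ⁱ`; these degrees are pairwise distinct (binary expansion) and below `2ⁿ`. Hence a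
nonzero multilinear `g` has a nonzero image of degree `< 2ⁿ`, which cannot lie in the image of `I`.
-/

open MvPolynomial

open Polynomial

namespace Polynomial

variable (R : Type*) [CommRing R]

noncomputable def quadIter : ℕ → R[X]
  | 0 => Polynomial.X
  | i + 1 => (Polynomial.X * (Polynomial.X - Polynomial.C 2) : R[X]).comp (quadIter i)

variable {R}

theorem quadIter_succ (i : ℕ) : quadIter R (i + 1) = quadIter R i ^ 2 - 2 * quadIter R i := by
  rw [quadIter, mul_comp, sub_comp, X_comp, C_comp, C_ofNat]
  ring

variable [IsDomain R]

theorem natDegree_quadIter (i : ℕ) : (quadIter R i).natDegree = 2 ^ i := by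
  induction i with
  | zero => exact natDegree_X
  | succ i ih =>
    rw [quadIter, natDegree_comp, ih, natDegree_mul X_ne_zero (X_sub_C_ne_zero 2), natDegree_X,
      natDegree_X_sub_C, pow_succ']

theorem quadIter_monic (i : ℕ) : (quadIter R i).Monic := by
  induction i with
  | zero => exact monic_X
  | succ i ih =>
    rw [quadIter]
    exact (monic_X.mul (monic_X_sub_C 2)).comp ih (by simp [natDegree_quadIter])

theorem degree_quadIter_sq (i : ℕ) : (quadIter R i ^ 2).degree = (2 ^ (i + 1) : ℕ) := by
  rw [degree_eq_natDegree ((quadIter_monic i).pow 2).ne_zero, natDegree_pow, natDegree_quadIter,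
    pow_succ']

end Polynomial

namespace MvPolynomial

variable {R : Type*} [CommRing R] {n : ℕ}

def binaryWeight (m : Fin n →₀ ℕ) : ℕ := ∑ i ∈ m.support.map Fin.valEmbedding, 2 ^ i

theorem binaryWeight_lt (m : Fin n →₀ ℕ) : binaryWeight m < 2 ^ n :=
  Nat.geomSum_lt le_rfl (by simp)

theorem binaryWeight_injOn : Set.InjOn (binaryWeight (n := n)) {m | ∀ i, m i ≤ 1} := by
  intro m hm m' hm' h
  have hsupp : m.support = m'.support :=
    Finset.map_injective _ (Finset.geomSum_injective le_rfl h)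
  ext i
  have hi := Finset.ext_iff.1 hsupp i
  rw [Finsupp.mem_support_iff, Finsupp.mem_support_iff] at hi
  have := hm i
  have := hm' i
  omega

theorem aeval_quadIter_monomial {m : Fin n →₀ ℕ} (hm : ∀ i, m i ≤ 1) (c : R) :
    aeval (fun i : Fin n ↦ quadIter R i) (monomial m c) =
      Polynomial.C c * ∏ i ∈ m.support, quadIter R i := by
  rw [aeval_monomial, Polynomial.algebraMap_eq, Finsupp.prod]
  congr 1
  refine Finset.prod_congr rfl fun i hi ↦ ?_
  rw [le_antisymm (hm i) (Finsupp.mem_support_iff.1 hi).bot_lt, pow_one]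

variable [IsDomain R]

theorem degree_aeval_quadIter_monomial {m : Fin n →₀ ℕ} (hm : ∀ i, m i ≤ 1) {c : R}
    (hc : c ≠ 0) :
    (aeval (fun i : Fin n ↦ quadIter R i) (monomial m c)).degree = binaryWeight m := by
  have hmonic : ∀ i ∈ m.support, (quadIter R i).Monic := fun i _ ↦ quadIter_monic i
  rw [aeval_quadIter_monomial hm, degree_C_mul hc,
    degree_eq_natDegree (monic_prod_of_monic _ _ hmonic).ne_zero,
    natDegree_prod_of_monic _ _ hmonic, binaryWeight, Finset.sum_map]
  simp [natDegree_quadIter]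

theorem degree_aeval_quadIter {g : MvPolynomial (Fin n) R} (hg : ∀ m ∈ g.support, ∀ i, m i ≤ 1) :
    (aeval (fun i : Fin n ↦ quadIter R i) g).degree =
      g.support.sup fun m ↦ (binaryWeight m : WithBot ℕ) := by
  conv_lhs => rw [g.as_sum, map_sum]
  rw [degree_sum_eq_of_disjoint]
  · exact Finset.sup_congr rfl fun m hm ↦
      degree_aeval_quadIter_monomial (hg m hm) (mem_support_iff.1 hm)
  · rintro m ⟨hm, -⟩ m' ⟨hm', -⟩ hne
    rw [Function.onFun, Function.comp_apply, Function.comp_apply,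
      degree_aeval_quadIter_monomial (hg m hm) (mem_support_iff.1 hm),
      degree_aeval_quadIter_monomial (hg m' hm') (mem_support_iff.1 hm'), Ne, Nat.cast_inj]
    exact fun h ↦ hne (binaryWeight_injOn (hg m hm) (hg m' hm') h)

theorem degree_aeval_quadIter_lt {g : MvPolynomial (Fin n) R}
    (hg : ∀ m ∈ g.support, ∀ i, m i ≤ 1) :
    (aeval (fun i : Fin n ↦ quadIter R i) g).degree < (2 ^ n : ℕ) := by
  rw [degree_aeval_quadIter hg, Finset.sup_lt_iff (WithBot.bot_lt_coe _)]
  exact fun m _ ↦ WithBot.coe_lt_coe.2 (binaryWeight_lt m)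

theorem eq_zero_of_aeval_quadIter_eq_zero {g : MvPolynomial (Fin n) R}
    (hg : ∀ m ∈ g.support, ∀ i, m i ≤ 1) (h : aeval (fun i : Fin n ↦ quadIter R i) g = 0) :
    g = 0 := by
  have hsup : (g.support.sup fun m ↦ (binaryWeight m : WithBot ℕ)) = ⊥ := by
    rw [← degree_aeval_quadIter hg, h, degree_zero]
  rw [← support_eq_empty, Finset.eq_empty_iff_forall_notMem]
  exact fun m hm ↦ WithBot.coe_ne_bot ((Finset.sup_eq_bot_iff _ _).1 hsup m hm)

end MvPolynomial

theorem quadIter_sq_dvd_aeval_gens {n : ℕ} (i : Fin n) :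
    quadIter ℤ (n - 1) ^ 2 ∣ aeval (fun j : Fin n ↦ quadIter ℤ j) (gens n i) := by
  unfold gens
  split_ifs with h
  · simp [quadIter_succ]
  · have hi : (i : ℕ) = n - 1 := by omega
    simp [hi]

theorem quadIter_sq_dvd_aeval_of_mem_span {n : ℕ} {g : MvPolynomial (Fin n) ℤ}
    (hg : g ∈ Ideal.span (Set.range (gens n))) :
    quadIter ℤ (n - 1) ^ 2 ∣ aeval (fun j : Fin n ↦ quadIter ℤ j) g := by
  obtain ⟨c, rfl⟩ := Ideal.mem_span_range_iff_exists_fun.1 hg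
  simp only [map_sum, map_mul]
  exact Finset.dvd_sum fun i _ ↦ dvd_mul_of_dvd_right (quadIter_sq_dvd_aeval_gens i) _

theorem stmt1_general (n : ℕ) (g : MvPolynomial (Fin n) ℤ)
    (hml : ∀ m ∈ g.support, ∀ i : Fin n, m i ≤ 1)
    (hg : g ∈ Ideal.span (Set.range (gens n))) :
    g = 0 := by
  refine eq_zero_of_aeval_quadIter_eq_zero hml
    (eq_zero_of_dvd_of_degree_lt (quadIter_sq_dvd_aeval_of_mem_span hg) ?_)
  rw [degree_quadIter_sq]
  exact (degree_aeval_quadIter_lt hml).trans_le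
    (WithBot.coe_le_coe.2 (Nat.pow_le_pow_right two_pos (by omega)))

theorem stmt1 (n : ℕ) (hn : 1 ≤ n) (g : MvPolynomial (Fin n) ℤ)
    (hml : ∀ m ∈ g.support, ∀ i : Fin n, m i ≤ 1)
    (hg : g ∈ Ideal.span (Set.range (gens n))) :
    g = 0 :=
  stmt1_general n g hml hg
end

section
/- Let n ≥ 1. In ℤ[X₀, …, X_{n−1}], let I be the ideal generated by Xᵢ² − (2·Xᵢ + X_{i+1}) for 0 ≤ i ≤ n−2 together with X_{n−1}². Then the quotient ring ℤ[X₀, …, X_{n−1}]/I is a free ℤ-module of rank 2ⁿ, with basis given by the images of the 2ⁿ square-free monomials ∏_{i ∈ S} Xᵢ for S ⊆ {0, …, n−1}. -/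
/-!
The relations say `X_{i+1} = X_i² - 2X_i`, so each `X_i` is `c_i(X_0)` for the monic polynomials
`c_0 = Y`, `c_{i+1} = c_i (c_i - 2)` of degree `2^i`, and the last relation becomes
`c_{n-1}(X_0)² = 0`.

Spanning: multiplying a square-free monomial by `X_i` either inserts `X_i`, or produces `X_i²`,
which is rewritten as `2X_i + X_{i+1}` (or `0` when `i = n - 1`); downward induction on `i`.

Independence: `X_i ↦ c_i` defines an algebra map to `ℤ[Y]/(c_{n-1}²)` sending `∏_{i ∈ S} X_i` to
the class of the monic `∏_{i ∈ S} c_i`, of degree `∑_{i ∈ S} 2^i < 2^n ≤ deg c_{n-1}²`. So this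
product is its own remainder modulo `c_{n-1}²`, and these remainders have pairwise distinct
degrees by uniqueness of binary expansions.
-/

open MvPolynomial

/-- The square-free monomial `∏_{i ∈ S} Xᵢ`, as an element of the quotient ring. -/
noncomputable def sqFreeMonomial (n : ℕ) (S : Finset (Fin n)) :
    MvPolynomial (Fin n) ℤ ⧸ Ideal.span (Set.range (gens n)) :=
  Ideal.Quotient.mk _ (∏ i ∈ S, X i)

namespace Polynomial

variable (R : Type*) [CommRing R]

noncomputable def chainPoly : ℕ → R[X]
  | 0 => X
  | i + 1 => chainPoly i * (chainPoly i - 2)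

variable {R}

theorem chainPoly_succ (i : ℕ) :
    chainPoly R (i + 1) = chainPoly R i ^ 2 - 2 * chainPoly R i := by
  rw [chainPoly]
  ring

section
variable [Nontrivial R]

theorem chainPoly_monic_and_natDegree (i : ℕ) :
    (chainPoly R i).Monic ∧ (chainPoly R i).natDegree = 2 ^ i := by
  induction i with
  | zero => exact ⟨monic_X, natDegree_X⟩
  | succ i ih =>
    obtain ⟨hmonic, hdeg⟩ := ih
    have hpos : 0 < (chainPoly R i).degree :=
      natDegree_pos_iff_degree_pos.mp (hdeg ▸ Nat.two_pow_pos i)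
    have hsub : (chainPoly R i - C 2).Monic := hmonic.sub_of_left (degree_C_le.trans_lt hpos)
    rw [chainPoly, ← C_ofNat, hmonic.natDegree_mul hsub, natDegree_sub_C, hdeg, pow_succ, mul_two]
    exact ⟨hmonic.mul hsub, rfl⟩

theorem chainPoly_monic (i : ℕ) : (chainPoly R i).Monic := (chainPoly_monic_and_natDegree i).1

theorem natDegree_chainPoly (i : ℕ) : (chainPoly R i).natDegree = 2 ^ i :=
  (chainPoly_monic_and_natDegree i).2

theorem prod_chainPoly_monic (T : Finset ℕ) : (∏ i ∈ T, chainPoly R i).Monic :=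
  monic_prod_of_monic _ _ fun i _ => chainPoly_monic i

theorem natDegree_prod_chainPoly (T : Finset ℕ) :
    (∏ i ∈ T, chainPoly R i).natDegree = ∑ i ∈ T, 2 ^ i := by
  rw [natDegree_prod_of_monic _ _ fun i _ => chainPoly_monic i]
  simp only [natDegree_chainPoly]

theorem degree_prod_chainPoly_lt {T : Finset ℕ} {n : ℕ} (hT : ∀ i ∈ T, i < n) :
    (∏ i ∈ T, chainPoly R i).degree < (chainPoly R (n - 1) ^ 2).degree := by
  rw [degree_eq_natDegree (prod_chainPoly_monic T).ne_zero,
    degree_eq_natDegree ((chainPoly_monic _).pow 2).ne_zero, Nat.cast_lt,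
    natDegree_prod_chainPoly, (chainPoly_monic _).natDegree_pow, natDegree_chainPoly, ← pow_succ']
  exact (Nat.geomSum_lt le_rfl hT).trans_le (Nat.pow_le_pow_right two_pos (by omega))

end

/-- Reindexed by `Finset.equivBitIndices`, these products have degree `k` at position `k`,
so they form a `Polynomial.Sequence`. -/
theorem linearIndependent_prod_chainPoly [IsDomain R] :
    LinearIndependent R fun T : Finset ℕ => ∏ i ∈ T, chainPoly R i := by
  let S : Sequence R :=
    { elems' := fun k => ∏ i ∈ Finset.equivBitIndices k, chainPoly R i
      degree_eq' := fun k => by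
        rw [degree_eq_natDegree (prod_chainPoly_monic _).ne_zero, natDegree_prod_chainPoly,
          ← Finset.equivBitIndices_symm_apply, Equiv.symm_apply_apply] }
  exact (linearIndependent_equiv' Finset.equivBitIndices rfl).mp S.linearIndependent

end Polynomial

open Polynomial (chainPoly)

section
variable {n : ℕ}

theorem mk_gens (i : Fin n) : Ideal.Quotient.mk (Ideal.span (Set.range (gens n))) (gens n i) = 0 :=
  Ideal.Quotient.eq_zero_iff_mem.mpr (Ideal.subset_span ⟨i, rfl⟩)

theorem mk_X_sq_of_lt (i : Fin n) (h : (i : ℕ) + 1 < n) :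
    Ideal.Quotient.mk (Ideal.span (Set.range (gens n))) (X i) ^ 2 =
      2 * Ideal.Quotient.mk _ (X i) + Ideal.Quotient.mk _ (X ⟨(i : ℕ) + 1, h⟩) := by
  have := mk_gens i
  rwa [gens, dif_pos h, map_sub, sub_eq_zero, map_add, map_mul, map_pow, map_ofNat] at this

theorem mk_X_sq_of_not_lt (i : Fin n) (h : ¬(i : ℕ) + 1 < n) :
    Ideal.Quotient.mk (Ideal.span (Set.range (gens n))) (X i) ^ 2 = 0 := by
  have := mk_gens i
  rwa [gens, dif_neg h, map_pow] at this

theorem sqFreeMonomial_insert {i : Fin n} {S : Finset (Fin n)} (hi : i ∉ S) :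
    sqFreeMonomial n (insert i S) = Ideal.Quotient.mk _ (X i) * sqFreeMonomial n S := by
  rw [sqFreeMonomial, sqFreeMonomial, Finset.prod_insert hi, map_mul]

theorem mk_X_mul_sqFreeMonomial_mem_span (i : Fin n) (S : Finset (Fin n)) :
    Ideal.Quotient.mk _ (X i) * sqFreeMonomial n S ∈
      Submodule.span ℤ (Set.range (sqFreeMonomial n)) := by
  by_cases hi : i ∈ S
  · obtain ⟨T, hiT, rfl⟩ : ∃ T, i ∉ T ∧ insert i T = S :=
      ⟨S.erase i, S.notMem_erase i, S.insert_erase hi⟩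
    rw [sqFreeMonomial_insert hiT, ← mul_assoc, ← sq]
    by_cases h : (i : ℕ) + 1 < n
    · rw [mk_X_sq_of_lt i h, add_mul, mul_assoc, ← sqFreeMonomial_insert hiT, ← smul_eq_mul,
        ofNat_smul_eq_nsmul]
      exact add_mem (Submodule.smul_mem _ _ (Submodule.subset_span ⟨_, rfl⟩))
        (mk_X_mul_sqFreeMonomial_mem_span ⟨(i : ℕ) + 1, h⟩ T)
    · rw [mk_X_sq_of_not_lt i h, zero_mul]
      exact zero_mem _
  · rw [← sqFreeMonomial_insert hi]
    exact Submodule.subset_span ⟨_, rfl⟩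
termination_by n - i

theorem span_sqFreeMonomial_eq_top :
    Submodule.span ℤ (Set.range (sqFreeMonomial n)) = ⊤ := by
  set M := Submodule.span ℤ (Set.range (sqFreeMonomial n))
  have hX (i : Fin n) : M ≤ M.comap (LinearMap.mulLeft ℤ (Ideal.Quotient.mk _ (X i))) :=
    Submodule.span_le.mpr <| by
      rintro _ ⟨S, rfl⟩
      exact mk_X_mul_sqFreeMonomial_mem_span i S
  rw [eq_top_iff]
  rintro x -
  obtain ⟨p, rfl⟩ := Ideal.Quotient.mk_surjective x
  induction p using MvPolynomial.induction_on with
  | C a =>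
    have : Ideal.Quotient.mk _ (C a) = a • sqFreeMonomial n ∅ := by
      simp [sqFreeMonomial]
    exact this ▸ M.smul_mem a (Submodule.subset_span ⟨∅, rfl⟩)
  | add p q hp hq =>
    rw [map_add]
    exact add_mem hp hq
  | mul_X p i hp =>
    rw [map_mul, mul_comm]
    exact hX i hp

theorem aeval_chainPoly_gens (i : Fin n) :
    aeval (fun j : Fin n => AdjoinRoot.mk (chainPoly ℤ (n - 1) ^ 2) (chainPoly ℤ j)) (gens n i) =
      0 := by
  rw [gens]
  split_ifs with h
  · simp [Polynomial.chainPoly_succ, two_mul]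
  · have hi : (i : ℕ) = n - 1 := by omega
    rw [map_pow, aeval_X, ← map_pow, hi, AdjoinRoot.mk_self]

-- For `n = 0` the modulus `chainPoly ℤ (0 - 1) ^ 2 = Y ^ 2` is arbitrary: there are no relations.
variable (n) in
noncomputable def toAdjoinRoot :
    MvPolynomial (Fin n) ℤ ⧸ Ideal.span (Set.range (gens n)) →ₐ[ℤ]
      AdjoinRoot (chainPoly ℤ (n - 1) ^ 2) :=
  Ideal.Quotient.liftₐ _ (aeval fun j => AdjoinRoot.mk _ (chainPoly ℤ j)) fun _ ha =>
    RingHom.mem_ker.mp <|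
      (Ideal.span_le (I := RingHom.ker _)).mpr (Set.range_subset_iff.mpr aeval_chainPoly_gens) ha

theorem toAdjoinRoot_sqFreeMonomial (S : Finset (Fin n)) :
    toAdjoinRoot n (sqFreeMonomial n S) = AdjoinRoot.mk _ (∏ i ∈ S, chainPoly ℤ i) := by
  change aeval _ (∏ i ∈ S, X i) = _
  simp

theorem linearIndependent_sqFreeMonomial : LinearIndependent ℤ (sqFreeMonomial n) := by
  have hg : (chainPoly ℤ (n - 1) ^ 2).Monic := (Polynomial.chainPoly_monic _).pow 2
  let L := (AdjoinRoot.modByMonicHom hg).comp (toAdjoinRoot n).toLinearMap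
  have hL : L ∘ sqFreeMonomial n = fun S => ∏ i ∈ S.map Fin.valEmbedding, chainPoly ℤ i := by
    funext S
    have hdeg := Polynomial.degree_prod_chainPoly_lt (R := ℤ) (T := S.map Fin.valEmbedding)
      (n := n) (by simp)
    simp only [Finset.prod_map, Fin.valEmbedding_apply] at hdeg ⊢
    rw [Function.comp_apply, LinearMap.comp_apply, AlgHom.toLinearMap_apply,
      toAdjoinRoot_sqFreeMonomial, AdjoinRoot.modByMonicHom_mk,
      (Polynomial.modByMonic_eq_self_iff hg).mpr hdeg]
  refine .of_comp L ?_
  rw [hL]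
  exact Polynomial.linearIndependent_prod_chainPoly.comp _ (Finset.map_injective _)

end

theorem stmt2_general (n : ℕ) :
    ∃ B : Module.Basis (Finset (Fin n)) ℤ
      (MvPolynomial (Fin n) ℤ ⧸ Ideal.span (Set.range (gens n))),
      ∀ S : Finset (Fin n), B S = sqFreeMonomial n S :=
  ⟨.mk linearIndependent_sqFreeMonomial span_sqFreeMonomial_eq_top.ge, Module.Basis.mk_apply _ _⟩

theorem stmt2 (n : ℕ) (hn : 1 ≤ n) :
    ∃ B : Module.Basis (Finset (Fin n)) ℤ
      (MvPolynomial (Fin n) ℤ ⧸ Ideal.span (Set.range (gens n))),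
      ∀ S : Finset (Fin n), B S = sqFreeMonomial n S :=
  stmt2_general n
end
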